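/- arXiv:1606.00900 — 4 statements merged into one kernel-verified Lean document; each statement's English description precedes it below -/
import Mathlib

section
/- The class K of finite edge-colored equivalence structures without monochromatic triangles has the amalgamation property: if A embeds into B and into C (all in K), then there is D in K together with embeddings of B and C into D agreeing on the image of A. -/
def IsKStruct {V : Type*} (E : V → V → Prop) (C : ℕ → V → V → Prop) : Prop :=
  Equivalence E ∧
  (∀ (i : ℕ) (x y : V), C i x y → C i y x) ∧
  (∀ (i : ℕ) (x : V), ¬ C i x x) ∧
  (∀ x y : V, x ≠ y → ∃! i : ℕ, C i x y) ∧
  (∀ (i : ℕ) (x y z : V), x ≠ y → y ≠ z → x ≠ z → ¬ (C i x y ∧ C i y z ∧ C i x z))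

/-- An embedding of edge-colored equivalence structures: an injective map preserving `E`,
each `C_i`, and their negations. -/
def IsKEmb {V W : Type*} (E₁ : V → V → Prop) (C₁ : ℕ → V → V → Prop)
    (E₂ : W → W → Prop) (C₂ : ℕ → W → W → Prop) (f : V → W) : Prop :=
  Function.Injective f ∧
  (∀ x y : V, E₁ x y ↔ E₂ (f x) (f y)) ∧
  (∀ (i : ℕ) (x y : V), C₁ i x y ↔ C₂ i (f x) (f y))

/-- In a finite structure only finitely many colors are used, so some color is unused. -/
lemma exists_unused_color {V : Type} [Fintype V] (Cc : ℕ → V → V → Prop)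
    (hu : ∀ x y : V, x ≠ y → ∃! i, Cc i x y) (hi : ∀ (i : ℕ) (x : V), ¬ Cc i x x) :
    ∃ N, ∀ i x y, N ≤ i → ¬ Cc i x y := by
  classical
  have hcol : ∀ p : V × V, ∃ n, Cc n p.1 p.2 ∨ p.1 = p.2 := by
    intro p
    by_cases h : p.1 = p.2
    · exact ⟨0, Or.inr h⟩
    · exact ⟨(hu p.1 p.2 h).exists.choose, Or.inl (hu p.1 p.2 h).exists.choose_spec⟩
  choose col hcolspec using hcol
  refine ⟨(Finset.univ.sup col) + 1, ?_⟩
  intro i x y hN hCxy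
  have hne : x ≠ y := by rintro rfl; exact hi i x hCxy
  have h1 : Cc (col (x, y)) x y := (hcolspec (x, y)).resolve_right hne
  have heq : i = col (x, y) := (hu x y hne).unique hCxy h1
  have hle := Finset.le_sup (f := col) (Finset.mem_univ (x, y))
  omega

/-- The class `K` of finite edge-colored equivalence structures without monochromatic
triangles has the amalgamation property: if `A` embeds into `B` and into `C` (all in `K`),
then there is `D ∈ K` with embeddings of `B` and `C` into `D` agreeing on the image of `A`. -/
theorem K_amalgamation {A B C : Type} [Fintype A] [Fintype B] [Fintype C]
    (EA : A → A → Prop) (CA : ℕ → A → A → Prop)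
    (EB : B → B → Prop) (CB : ℕ → B → B → Prop)
    (EC : C → C → Prop) (CC : ℕ → C → C → Prop)
    (hA : IsKStruct EA CA) (hB : IsKStruct EB CB) (hC : IsKStruct EC CC)
    (f : A → B) (g : A → C) (hf : IsKEmb EA CA EB CB f) (hg : IsKEmb EA CA EC CC g) :
    ∃ (D : Type) (_ : Fintype D) (ED : D → D → Prop) (CD : ℕ → D → D → Prop),
      IsKStruct ED CD ∧
      ∃ (h : B → D) (k : C → D),
        IsKEmb EB CB ED CD h ∧ IsKEmb EC CC ED CD k ∧ h ∘ f = k ∘ g := by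
  classical
  obtain ⟨hEA, hCsA, hCiA, hCuA, hCtA⟩ := hA
  obtain ⟨hEB, hCsB, hCiB, hCuB, hCtB⟩ := hB
  obtain ⟨hEC, hCsC, hCiC, hCuC, hCtC⟩ := hC
  obtain ⟨hfi, hfE, hfC⟩ := hf
  obtain ⟨hgi, hgE, hgC⟩ := hg
  obtain ⟨NB, hNB⟩ := exists_unused_color CB hCuB hCiB
  obtain ⟨NC, hNC⟩ := exists_unused_color CC hCuC hCiC
  set N : ℕ := max NB NC with hNdef
  have hNB' : ∀ x y : B, ¬ CB N x y := fun x y => hNB N x y (le_max_left _ _)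
  have hNC' : ∀ x y : C, ¬ CC N x y := fun x y => hNC N x y (le_max_right _ _)
  have hrg : ∀ (c : C), c ∉ Set.range g → ∀ a, g a ≠ c := fun c hc a h => hc ⟨a, h⟩
  -- transfer lemmas between B and C via A
  have hEBC : ∀ a a', EB (f a) (f a') ↔ EC (g a) (g a') :=
    fun a a' => (hfE a a').symm.trans (hgE a a')
  have hCBC : ∀ i a a', CB i (f a) (f a') ↔ CC i (g a) (g a') :=
    fun i a a' => (hfC i a a').symm.trans (hgC i a a')
  -- the cross-color relation
  let cross : ℕ → B → C → Prop := fun i b c =>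
    (∃ a, f a = b ∧ CC i (g a) c) ∨ (b ∉ Set.range f ∧ i = N)
  -- triangle helpers
  have tri1 : ∀ (i : ℕ) (b1 b2 : B) (c : C), c ∉ Set.range g → b1 ≠ b2 → CB i b1 b2 →
      cross i b1 c → cross i b2 c → False := by
    intro i b1 b2 c hc hne h12 h1 h2
    rcases h1 with ⟨a1, rfl, h1⟩ | ⟨_, rfl⟩
    · rcases h2 with ⟨a2, rfl, h2⟩ | ⟨_, rfl⟩
      · have hga : g a1 ≠ g a2 := fun h => hne (congrArg f (hgi h))
        exact hCtC i (g a1) (g a2) c hga (hrg c hc a2) (hrg c hc a1)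
          ⟨(hCBC i a1 a2).mp h12, h2, h1⟩
      · exact hNB' _ _ h12
    · exact hNB' _ _ h12
  have tri2 : ∀ (i : ℕ) (b : B) (c1 c2 : C), c1 ∉ Set.range g → c2 ∉ Set.range g →
      c1 ≠ c2 → CC i c1 c2 → cross i b c1 → cross i b c2 → False := by
    intro i b c1 c2 hc1 hc2 hne h12 h1 h2
    rcases h1 with ⟨a1, rfl, h1⟩ | ⟨_, rfl⟩
    · rcases h2 with ⟨a2, ha2, h2⟩ | ⟨hn, _⟩
      · have : a2 = a1 := hfi ha2
        subst this
        exact hCtC i (g a2) c1 c2 (hrg c1 hc1 a2) hne (hrg c2 hc2 a2) ⟨h1, h12, h2⟩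
      · exact hn ⟨a1, rfl⟩
    · exact hNC' _ _ h12
  -- the amalgam
  refine ⟨B ⊕ {c : C // c ∉ Set.range g}, Fintype.ofFinite _,
    (fun x y => match x, y with
      | Sum.inl b, Sum.inl b' => EB b b'
      | Sum.inl b, Sum.inr c => ∃ a, EB b (f a) ∧ EC (g a) c.1
      | Sum.inr c, Sum.inl b => ∃ a, EB b (f a) ∧ EC (g a) c.1
      | Sum.inr c, Sum.inr c' => EC c.1 c'.1),
    (fun i x y => match x, y with
      | Sum.inl b, Sum.inl b' => CB i b b'
      | Sum.inl b, Sum.inr c => cross i b c.1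
      | Sum.inr c, Sum.inl b => cross i b c.1
      | Sum.inr c, Sum.inr c' => CC i c.1 c'.1),
    ⟨?_, ?_, ?_, ?_, ?_⟩, ?_⟩
  · -- Equivalence
    constructor
    · rintro (b | c)
      · exact hEB.refl b
      · exact hEC.refl c.1
    · rintro (b | c) (b' | c') h
      · exact hEB.symm h
      · exact h
      · exact h
      · exact hEC.symm h
    · rintro (b | c) (b' | c') (b'' | c'') h1 h2
      · exact hEB.trans h1 h2
      · obtain ⟨a, ha1, ha2⟩ := h2
        exact ⟨a, hEB.trans h1 ha1, ha2⟩
      · obtain ⟨a, ha1, ha2⟩ := h1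
        obtain ⟨a', hb1, hb2⟩ := h2
        have : EC (g a) (g a') := hEC.trans ha2 (hEC.symm hb2)
        have : EB (f a) (f a') := (hEBC a a').mpr this
        exact hEB.trans ha1 (hEB.trans this (hEB.symm hb1))
      · obtain ⟨a, ha1, ha2⟩ := h1
        exact ⟨a, ha1, hEC.trans ha2 h2⟩
      · obtain ⟨a, ha1, ha2⟩ := h1
        exact ⟨a, hEB.symm (hEB.trans (hEB.symm ha1) h2), ha2⟩
      · obtain ⟨a, ha1, ha2⟩ := h1
        obtain ⟨a', hb1, hb2⟩ := h2
        have hEaa' : EB (f a) (f a') := hEB.trans (hEB.symm ha1) hb1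
        have : EC (g a) (g a') := (hEBC a a').mp hEaa'
        exact hEC.trans (hEC.symm ha2) (hEC.trans this hb2)
      · obtain ⟨a, ha1, ha2⟩ := h2
        exact ⟨a, ha1, hEC.trans ha2 (hEC.symm h1)⟩
      · exact hEC.trans h1 h2
  · -- symmetry of colors
    rintro i (b | c) (b' | c') h
    · exact hCsB i _ _ h
    · exact h
    · exact h
    · exact hCsC i _ _ h
  · -- irreflexivity of colors
    rintro i (b | c)
    · exact hCiB i b
    · exact hCiC i c.1
  · -- unique color
    rintro (b | c) (b' | c') hne
    · have hbb : b ≠ b' := fun h => hne (congrArg Sum.inl h)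
      exact hCuB b b' hbb
    · show ∃! i, cross i b c'.1
      by_cases hb : b ∈ Set.range f
      · obtain ⟨a, rfl⟩ := hb
        have hgc : g a ≠ c'.1 := hrg c'.1 c'.2 a
        obtain ⟨i0, hi0, hi0u⟩ := hCuC (g a) c'.1 hgc
        refine ⟨i0, Or.inl ⟨a, rfl, hi0⟩, ?_⟩
        rintro j (⟨a', ha', hj⟩ | ⟨hn, rfl⟩)
        · have : a' = a := hfi ha'
          subst this
          exact hi0u j hj
        · exact absurd ⟨a, rfl⟩ hn
      · refine ⟨N, Or.inr ⟨hb, rfl⟩, ?_⟩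
        rintro j (⟨a, ha, _⟩ | ⟨_, rfl⟩)
        · exact absurd ⟨a, ha⟩ hb
        · rfl
    · show ∃! i, cross i b' c.1
      by_cases hb : b' ∈ Set.range f
      · obtain ⟨a, rfl⟩ := hb
        have hgc : g a ≠ c.1 := hrg c.1 c.2 a
        obtain ⟨i0, hi0, hi0u⟩ := hCuC (g a) c.1 hgc
        refine ⟨i0, Or.inl ⟨a, rfl, hi0⟩, ?_⟩
        rintro j (⟨a', ha', hj⟩ | ⟨hn, rfl⟩)
        · have : a' = a := hfi ha'
          subst this
          exact hi0u j hj
        · exact absurd ⟨a, rfl⟩ hn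
      · refine ⟨N, Or.inr ⟨hb, rfl⟩, ?_⟩
        rintro j (⟨a, ha, _⟩ | ⟨_, rfl⟩)
        · exact absurd ⟨a, ha⟩ hb
        · rfl
    · have hcc : c.1 ≠ c'.1 := fun h => hne (congrArg Sum.inr (Subtype.ext h))
      exact hCuC c.1 c'.1 hcc
  · -- no monochromatic triangle
    rintro i (b1 | c1) (b2 | c2) (b3 | c3) hxy hyz hxz ⟨h1, h2, h3⟩
    · exact hCtB i b1 b2 b3 (fun h => hxy (congrArg Sum.inl h))
        (fun h => hyz (congrArg Sum.inl h)) (fun h => hxz (congrArg Sum.inl h)) ⟨h1, h2, h3⟩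
    · exact tri1 i b1 b2 c3.1 c3.2 (fun h => hxy (congrArg Sum.inl h)) h1 h3 h2
    · exact tri1 i b1 b3 c2.1 c2.2 (fun h => hxz (congrArg Sum.inl h)) h3 h1 h2
    · exact tri2 i b1 c2.1 c3.1 c2.2 c3.2
        (fun h => hyz (congrArg Sum.inr (Subtype.ext h))) h2 h1 h3
    · exact tri1 i b2 b3 c1.1 c1.2 (fun h => hyz (congrArg Sum.inl h)) h2 h1 h3
    · exact tri2 i b2 c1.1 c3.1 c1.2 c3.2
        (fun h => hxz (congrArg Sum.inr (Subtype.ext h))) h3 h1 h2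
    · exact tri2 i b3 c1.1 c2.1 c1.2 c2.2
        (fun h => hxy (congrArg Sum.inr (Subtype.ext h))) h1 h3 h2
    · exact hCtC i c1.1 c2.1 c3.1 (fun h => hxy (congrArg Sum.inr (Subtype.ext h)))
        (fun h => hyz (congrArg Sum.inr (Subtype.ext h)))
        (fun h => hxz (congrArg Sum.inr (Subtype.ext h))) ⟨h1, h2, h3⟩
  · -- the embeddings
    refine ⟨Sum.inl, fun c => if hc : c ∈ Set.range g then Sum.inl (f hc.choose)
        else Sum.inr ⟨c, hc⟩, ⟨Sum.inl_injective, fun x y => Iff.rfl, fun i x y => Iff.rfl⟩,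
        ?_, ?_⟩
    · -- k is an embedding
      have kg : ∀ a, (if hc : g a ∈ Set.range g then Sum.inl (f hc.choose)
          else Sum.inr (⟨g a, hc⟩ : {c : C // c ∉ Set.range g})) = Sum.inl (f a) := by
        intro a
        have hm : g a ∈ Set.range g := ⟨a, rfl⟩
        rw [dif_pos hm]
        exact congrArg (fun x => Sum.inl (f x)) (hgi hm.choose_spec)
      refine ⟨?_, ?_, ?_⟩
      · intro x y hk
        dsimp only at hk
        by_cases hx : x ∈ Set.range g <;> by_cases hy : y ∈ Set.range g
        · obtain ⟨a1, rfl⟩ := hx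
          obtain ⟨a2, rfl⟩ := hy
          simp only [kg] at hk
          exact congrArg g (hfi (Sum.inl.inj hk))
        · obtain ⟨a1, rfl⟩ := hx
          rw [kg, dif_neg hy] at hk
          exact absurd hk (by simp)
        · obtain ⟨a2, rfl⟩ := hy
          rw [kg, dif_neg hx] at hk
          exact absurd hk (by simp)
        · rw [dif_neg hx, dif_neg hy] at hk
          exact congrArg Subtype.val (Sum.inr.inj hk)
      · intro x y
        dsimp only
        by_cases hx : x ∈ Set.range g <;> by_cases hy : y ∈ Set.range g
        · obtain ⟨a1, rfl⟩ := hx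
          obtain ⟨a2, rfl⟩ := hy
          simp only [kg]
          exact (hgE a1 a2).symm.trans (hfE a1 a2)
        · obtain ⟨a, rfl⟩ := hx
          rw [kg, dif_neg hy]
          show EC (g a) y ↔ ∃ a', EB (f a) (f a') ∧ EC (g a') y
          constructor
          · intro h
            exact ⟨a, hEB.refl _, h⟩
          · rintro ⟨a', h1, h2⟩
            exact hEC.trans ((hEBC a a').mp h1) h2
        · obtain ⟨a, rfl⟩ := hy
          rw [kg, dif_neg hx]
          show EC x (g a) ↔ ∃ a', EB (f a) (f a') ∧ EC (g a') x
          constructor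
          · intro h
            exact ⟨a, hEB.refl _, hEC.symm h⟩
          · rintro ⟨a', h1, h2⟩
            exact hEC.symm (hEC.trans ((hEBC a a').mp h1) h2)
        · rw [dif_neg hx, dif_neg hy]
      · intro i x y
        dsimp only
        by_cases hx : x ∈ Set.range g <;> by_cases hy : y ∈ Set.range g
        · obtain ⟨a1, rfl⟩ := hx
          obtain ⟨a2, rfl⟩ := hy
          simp only [kg]
          exact (hCBC i a1 a2).symm
        · obtain ⟨a, rfl⟩ := hx
          rw [kg, dif_neg hy]
          show CC i (g a) y ↔ cross i (f a) y
          constructor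
          · intro h
            exact Or.inl ⟨a, rfl, h⟩
          · rintro (⟨a', ha', h⟩ | ⟨hn, _⟩)
            · have : a' = a := hfi ha'
              subst this
              exact h
            · exact absurd ⟨a, rfl⟩ hn
        · obtain ⟨a, rfl⟩ := hy
          rw [kg, dif_neg hx]
          show CC i x (g a) ↔ cross i (f a) x
          constructor
          · intro h
            exact Or.inl ⟨a, rfl, hCsC i _ _ h⟩
          · rintro (⟨a', ha', h⟩ | ⟨hn, _⟩)
            · have : a' = a := hfi ha'
              subst this
              exact hCsC i _ _ h
            · exact absurd ⟨a, rfl⟩ hn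
        · rw [dif_neg hx, dif_neg hy]
    · -- commutativity
      funext a
      have hm : g a ∈ Set.range g := ⟨a, rfl⟩
      show Sum.inl (f a) = _
      dsimp only [Function.comp]
      rw [dif_pos hm]
      exact congrArg (fun x => Sum.inl (f x)) (hgi hm.choose_spec).symm
end

section
/- In A(T), the level sets G_n are invariant under automorphisms: a ∈ G_n if and only if f_{id_n}(a) = a and for all m < n, f_{id_m}(a) ≠ a. -/
def IsTree (T : Set (List ℕ)) : Prop :=
  [] ∈ T ∧ ∀ (l : List ℕ) (x : ℕ), l ++ [x] ∈ T → l ∈ T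

/-- The predecessor map `p` on finite sets of sequences: `t* ∈ p(a)` iff the number of
successors of `t*` belonging to `a` is odd. -/
def pstep (a : Finset (List ℕ)) : Finset (List ℕ) :=
  (a.image List.dropLast).filter
    (fun t => Odd ((a.filter (fun s => s.dropLast = t)).card))

/-- An element of the structure `A(T)`: a level `n` together with a finite set of
level-`n` nodes. -/
def El : Type := ℕ × Finset (List ℕ)

/-- `El.valid T x` says that `x` really is an element of `G_n` for `n = x.1`:
all of its members are nodes of `T` of length `x.1`. -/
def El.valid (T : Set (List ℕ)) (x : El) : Prop :=
  ∀ σ ∈ x.2, σ ∈ T ∧ σ.length = x.1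

/-- The interpretation of the named function `f_a` of `A(T)` applied to `b`:
with `a ∈ G_m`, `b ∈ G_n` and `k = min(m,n)`, `f_a(b) = p^{m-k}(a) Δ p^{n-k}(b)`. -/
def Ffun (a b : El) : El :=
  (min a.1 b.1,
    symmDiff (pstep^[a.1 - min a.1 b.1] a.2) (pstep^[b.1 - min a.1 b.1] b.2))

theorem pstep_empty : pstep ∅ = ∅ := rfl

theorem iterate_pstep_empty (j : ℕ) : pstep^[j] ∅ = ∅ :=
  Function.iterate_fixed pstep_empty j

theorem Ffun_empty_eq_self_iff (n : ℕ) (x : El) :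
    Ffun (n, ∅) x = x ↔ x.1 ≤ n := by
  obtain ⟨k, s⟩ := x
  constructor
  · intro h
    have hk : min n k = k := congrArg Prod.fst h
    exact min_eq_right_iff.mp hk
  · intro hkn
    simp only [Ffun, min_eq_right hkn, Nat.sub_self, Function.iterate_zero, id,
      iterate_pstep_empty]
    exact congrArg (k, ·) (bot_symmDiff s)

theorem level_definable_general (x : El) (n : ℕ) :
    x.1 = n ↔
      (Ffun (n, (∅ : Finset (List ℕ))) x = x ∧
        ∀ m < n, Ffun (m, (∅ : Finset (List ℕ))) x ≠ x) := by
  simp only [Ffun_empty_eq_self_iff, ne_eq, not_le]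
  exact ⟨fun h => ⟨h.le, fun m hm => h ▸ hm⟩,
    fun ⟨hle, hlt⟩ => le_antisymm hle (not_lt.mp fun h => lt_irrefl _ (hlt _ h))⟩

/-- In `A(T)`, the level sets `G_n` are definable from the functions `f_{id_n}` (and
hence invariant under automorphisms): an element `x` lies in `G_n` if and only if
`f_{id_n}(x) = x` and `f_{id_m}(x) ≠ x` for all `m < n`. -/
theorem level_definable (T : Set (List ℕ)) (hT : IsTree T) (x : El)
    (hx : El.valid T x) (n : ℕ) :
    x.1 = n ↔
      (Ffun (n, (∅ : Finset (List ℕ))) x = x ∧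
        ∀ m < n, Ffun (m, (∅ : Finset (List ℕ))) x ≠ x) :=
  level_definable_general x n
end

section
/- Suppose a structure A contains elements a, and a group-like family of definable bijections: for each pair a,b in a set S there is a function f_{bΔa} with b = f_{bΔa}(a), and every automorphism g of A satisfies g(b) = f_{bΔa}(g(a)) for all b ∈ S. Then any automorphism of A fixing a pointwise fixes all of S pointwise; consequently A has no three distinct automorphism-invariant subsets E_1, E_2, E_3 of S that form an order-indiscernible triple (i.e., there cannot simultaneously exist an automorphism fixing E_1 setwise and mapping E_2 to E_3, and an automorphism fixing E_1, E_2, E_3 setwise, if these are required to witness full order-indiscernibility with E_2 ≠ E_3). -/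
/-- Abstract form of the argument that `A(T)` has no indiscernible ordered triple of
imaginaries.  Suppose `A` is a structure (with `P` picking out its automorphisms among
the bijections of its universe), `S` a subset of `A`, and `a ∈ S`, such that for each
`b ∈ S` there is a named unary function `φ = f_{bΔa}` with `φ(a) = b` which commutes
with every automorphism.  Then every automorphism fixing `a` fixes `S` pointwise, and
consequently there are no subsets `E₁, E₂, E₃` of `S` with `a ∈ E₁` and `E₂ ≠ E₃`
witnessing order-indiscernibility: there cannot simultaneously exist an automorphism
fixing `E₁` and mapping `E₂` onto `E₃`, together with an automorphism fixing `E₁`,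
`E₂`, `E₃` setwise. -/
theorem no_indiscernible_triple_abstract {A : Type*} (P : (A ≃ A) → Prop)
    (S : Set A) (a : A) (ha : a ∈ S)
    (H : ∀ b ∈ S, ∃ φ : A → A, φ a = b ∧
      ∀ g : A ≃ A, P g → ∀ x : A, g (φ x) = φ (g x)) :
    (∀ g : A ≃ A, P g → g a = a → ∀ b ∈ S, g b = b) ∧
    ¬ ∃ E₁ E₂ E₃ : Set A, E₁ ⊆ S ∧ E₂ ⊆ S ∧ E₃ ⊆ S ∧ a ∈ E₁ ∧ E₂ ≠ E₃ ∧
      (∃ g : A ≃ A, P g ∧ (∀ x ∈ E₁, g x = x) ∧ g '' E₂ = E₃) ∧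
      (∃ h : A ≃ A, P h ∧ h '' E₁ = E₁ ∧ h '' E₂ = E₂ ∧ h '' E₃ = E₃) := by
  have key : ∀ g : A ≃ A, P g → g a = a → ∀ b ∈ S, g b = b := by
    intro g hg hga b hb
    obtain ⟨φ, hφa, hφc⟩ := H b hb
    calc g b = g (φ a) := by rw [hφa]
    _ = φ (g a) := hφc g hg a
    _ = b := by rw [hga, hφa]
  refine ⟨key, ?_⟩
  rintro ⟨E₁, E₂, E₃, h₁, h₂, h₃, ha₁, hne, ⟨g, hg, hgE₁, hgE₂⟩, -⟩
  apply hne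
  rw [← hgE₂]
  ext x
  constructor
  · rintro hx
    exact ⟨x, hx, key g hg (hgE₁ a ha₁) x (h₂ hx)⟩
  · rintro ⟨y, hy, rfl⟩
    rwa [key g hg (hgE₁ a ha₁) y (h₂ hy)]
end

section
/- Let U be a linear order with a well-ordered proper initial segment I that has no maximum, such that every element of U has a successor. Then there exists a sequence (R_n)_{n∈ω} of infinite subsets of U such that: R_0 contains an element of I; for each n there is u ∈ I bounding R_n ∩ I above; for each u ∈ R_n there is v ∈ R_{n+1} with u < v; for each u ∈ R_n ∩ I there is v ∈ R_{n+1} ∩ I with u < v; and ⋃_n R_n ∩ I is cofinal in I. -/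
/-- Lemma on the sequence `(R_n)`: let `U` be a countable linear order with a
well-ordered nonempty proper initial segment `I` having no greatest element, in which
every element has a successor.  Then there is a sequence `(R_n)` of infinite subsets of
`U` such that `R_0` meets `I`, each `R_n ∩ I` is bounded above in `I`, every element of
`R_n` has a larger element in `R_{n+1}`, every element of `R_n ∩ I` has a larger element
in `R_{n+1} ∩ I`, and `⋃_n R_n ∩ I` is cofinal in `I`. -/
theorem exists_R_sequence {U : Type*} [LinearOrder U] [Countable U] (I : Set U)
    (hlower : IsLowerSet I) (hwf : I.IsWF) (hne : I.Nonempty)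
    (hproper : ∃ u : U, u ∉ I)
    (hnomax : ∀ u ∈ I, ∃ v ∈ I, u < v)
    (hsucc : ∀ u : U, ∃ v : U, u < v ∧ ∀ w : U, u < w → v ≤ w) :
    ∃ R : ℕ → Set U,
      (∀ n : ℕ, (R n).Infinite) ∧
      (∃ u ∈ I, u ∈ R 0) ∧
      (∀ n : ℕ, ∃ u ∈ I, ∀ v ∈ R n ∩ I, v ≤ u) ∧
      (∀ n : ℕ, ∀ u ∈ R n, ∃ v ∈ R (n + 1), u < v) ∧
      (∀ n : ℕ, ∀ u ∈ R n ∩ I, ∃ v ∈ R (n + 1) ∩ I, u < v) ∧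
      (∀ u ∈ I, ∃ n : ℕ, ∃ v ∈ R n ∩ I, u ≤ v) := by
  obtain ⟨u0, hu0⟩ := hproper
  choose s hs1 _ using hsucc
  -- the successor orbit of u0 lies outside I and is infinite
  have hsI : ∀ u : U, u ∉ I → s u ∉ I := fun u hu hsu => hu (hlower (le_of_lt (hs1 u)) hsu)
  set g : ℕ → U := fun n => s^[n] u0 with hg
  have hgmono : StrictMono g := strictMono_nat_of_lt_succ (by
    intro n
    simp only [hg, Function.iterate_succ_apply']
    exact hs1 _)
  have hgI : ∀ n, g n ∉ I := by
    intro n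
    induction n with
    | zero => exact hu0
    | succ k ih =>
      have : g (k + 1) = s (g k) := by simp [hg, Function.iterate_succ_apply']
      rw [this]; exact hsI _ ih
  have hIc_inf : (Iᶜ : Set U).Infinite :=
    Set.infinite_of_injective_forall_mem (f := g) hgmono.injective (fun n => hgI n)
  -- enumeration of I
  have hIcount : I.Countable := Set.to_countable I
  obtain ⟨e, hrange⟩ := Set.Countable.exists_eq_range hIcount hne
  have he : ∀ n, e n ∈ I := fun n => hrange ▸ Set.mem_range_self n
  -- key step: given two elements of I, find a strictly larger one in I
  have key : ∀ a, a ∈ I → ∀ b, b ∈ I → ∃ v, v ∈ I ∧ a < v ∧ b < v := by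
    intro a ha b hb
    have hmax : max a b ∈ I := by
      rcases max_cases a b with ⟨h, _⟩ | ⟨h, _⟩ <;> rw [h] <;> assumption
    obtain ⟨v, hv, hlt⟩ := hnomax _ hmax
    exact ⟨v, hv, lt_of_le_of_lt (le_max_left _ _) hlt,
      lt_of_le_of_lt (le_max_right _ _) hlt⟩
  choose nxt hnxtI hnxt1 hnxt2 using key
  -- strictly increasing cofinal sequence in I
  let C : ℕ → {x : U // x ∈ I} := fun n =>
    Nat.rec ⟨hne.choose, hne.choose_spec⟩
      (fun n p => ⟨nxt p.1 p.2 (e n) (he n), hnxtI _ _ _ _⟩) n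
  have hCsucc : ∀ n, (C n).1 < (C (n + 1)).1 := fun n => hnxt1 _ _ _ _
  have hCe : ∀ n, e n < (C (n + 1)).1 := fun n => hnxt2 _ _ _ _
  refine ⟨fun n => Iᶜ ∪ {(C n).1}, ?_, ?_, ?_, ?_, ?_, ?_⟩
  · exact fun n => hIc_inf.mono Set.subset_union_left
  · exact ⟨(C 0).1, (C 0).2, Or.inr rfl⟩
  · intro n
    refine ⟨(C n).1, (C n).2, ?_⟩
    rintro v ⟨hv1 | hv1, hv2⟩
    · exact absurd hv2 hv1
    · exact le_of_eq hv1
  · intro n u hu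
    rcases hu with hu | hu
    · exact ⟨s u, Or.inl (hsI u hu), hs1 u⟩
    · exact ⟨(C (n + 1)).1, Or.inr rfl, hu ▸ hCsucc n⟩
  · rintro n u ⟨hu1 | hu1, hu2⟩
    · exact absurd hu2 hu1
    · exact ⟨(C (n + 1)).1, ⟨Or.inr rfl, (C (n + 1)).2⟩, hu1 ▸ hCsucc n⟩
  · intro u hu
    obtain ⟨k, hk⟩ : ∃ k, e k = u := by
      have : u ∈ Set.range e := hrange ▸ hu
      exact this
    exact ⟨k + 1, (C (k + 1)).1, ⟨Or.inr rfl, (C (k + 1)).2⟩, hk ▸ le_of_lt (hCe k)⟩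
end
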